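/- Let K > 0, μ > 0, let ε be a real symmetric 3 × 3 matrix with spectral positive/negative parts ε± = Σᵢ ⟨λᵢ⟩± Nᵢ Nᵢᵀ, and define the split invariants I₁±(ε) = ⟨tr ε⟩± and I₂±(ε) = tr((ε±)²). Then: I₁⁺(ε) + I₁⁻(ε) = tr ε and I₁⁺(ε) · I₁⁻(ε) = 0; tr(ε²) = I₂⁺(ε) + I₂⁻(ε); and consequently the strain energy splits additively, Ψ̃(I₁(ε), I₂(ε)) = Ψ̃(I₁⁺(ε), I₂⁺(ε)) + Ψ̃(I₁⁻(ε), I₂⁻(ε)), where Ψ̃(I₁, I₂) = (K/2)I₁² − μ(I₁²/3 − I₂). -/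

import Mathlib

open Matrix

/-!
Writing `ε = Σᵢ λᵢ Nᵢ Nᵢᵀ` in the orthonormal eigenbasis, the rank-one projectors `Nᵢ Nᵢᵀ` are
mutually orthogonal idempotents, so `ε = ε⁺ + ε⁻` with `ε⁺ ε⁻ = 0` because `⟨λ⟩₊ ⟨λ⟩₋ = 0`.
Hence `tr ε² = tr (ε⁺)² + tr (ε⁻)²`, i.e. `I₂` is additive, while `I₁² = (I₁⁺)² + (I₁⁻)²` for the
same reason; `Ψ̃` is a linear combination of `I₁²` and `I₂`, so it splits as well.
-/

section Macaulay

variable {α : Type*} [Field α] [LinearOrder α] [IsStrictOrderedRing α]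

theorem add_abs_div_two_add_sub_abs_div_two (x : α) : (x + |x|) / 2 + (x - |x|) / 2 = x := by
  ring

theorem add_abs_div_two_mul_sub_abs_div_two (x : α) : (x + |x|) / 2 * ((x - |x|) / 2) = 0 := by
  linear_combination (-1 / 4 : α) * sq_abs x

end Macaulay

namespace Matrix

section Orthonormal

variable {ι m R : Type*} [Fintype m] [DecidableEq ι] [CommSemiring R] {N : ι → m → R}

theorem vecMulVec_self_mul_vecMulVec_self_of_orthonormal
    (hN : ∀ i j, N i ⬝ᵥ N j = if i = j then 1 else 0) (i j : ι) :
    vecMulVec (N i) (N i) * vecMulVec (N j) (N j) = if i = j then vecMulVec (N i) (N i) else 0 := by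
  rw [vecMulVec_mul_vecMulVec, hN]
  split_ifs with hij
  · rw [one_smul, hij]
  · rw [zero_smul, vecMulVec_zero]

theorem sum_smul_vecMulVec_mul_sum_smul_vecMulVec [Fintype ι]
    (hN : ∀ i j, N i ⬝ᵥ N j = if i = j then 1 else 0) (c d : ι → R) :
    (∑ i, c i • vecMulVec (N i) (N i)) * ∑ j, d j • vecMulVec (N j) (N j)
      = ∑ i, (c i * d i) • vecMulVec (N i) (N i) := by
  simp only [Finset.sum_mul_sum, smul_mul_smul_comm,
    vecMulVec_self_mul_vecMulVec_self_of_orthonormal hN, smul_ite, smul_zero,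
    Finset.sum_ite_eq, Finset.mem_univ, if_true]

end Orthonormal

section Spectral

variable {n R : Type*} [Fintype n] [DecidableEq n] [CommRing R] {N : n → n → R}

theorem sum_vecMulVec_self_eq_one_of_orthonormal
    (hN : ∀ i j, N i ⬝ᵥ N j = if i = j then 1 else 0) :
    ∑ i, vecMulVec (N i) (N i) = 1 := by
  have hrows : of N * (of N)ᵀ = 1 := by
    ext i j
    simpa [mul_apply, dotProduct, one_apply] using hN i j
  rw [← mul_eq_one_comm.mp hrows]
  ext a b
  simp [mul_apply, vecMulVec_apply, sum_apply]

theorem eq_sum_smul_vecMulVec_of_mulVec_eq {A : Matrix n n R} {lam : n → R}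
    (hA : ∀ i, A *ᵥ N i = lam i • N i) (hN : ∀ i j, N i ⬝ᵥ N j = if i = j then 1 else 0) :
    A = ∑ i, lam i • vecMulVec (N i) (N i) := by
  calc A = A * ∑ i, vecMulVec (N i) (N i) := by
        rw [sum_vecMulVec_self_eq_one_of_orthonormal hN, Matrix.mul_one]
    _ = ∑ i, lam i • vecMulVec (N i) (N i) := by
        simp only [Finset.mul_sum, mul_vecMulVec, hA, smul_vecMulVec]

end Spectral

theorem trace_add_mul_add_of_mul_eq_zero {n R : Type*} [Fintype n] [CommSemiring R]
    {A B : Matrix n n R} (hAB : A * B = 0) :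
    ((A + B) * (A + B)).trace = (A * A).trace + (B * B).trace := by
  rw [Matrix.add_mul, Matrix.mul_add, Matrix.mul_add, trace_add, trace_add, trace_add,
    trace_mul_comm B A, hAB, trace_zero]
  ring

end Matrix

noncomputable def isotropicEnergy (K μ I₁ I₂ : ℝ) : ℝ := K / 2 * I₁ ^ 2 - μ * (I₁ ^ 2 / 3 - I₂)

theorem isotropicEnergy_add_add_of_mul_eq_zero (K μ : ℝ) {a b : ℝ} (hab : a * b = 0)
    (p q : ℝ) :
    isotropicEnergy K μ (a + b) (p + q) = isotropicEnergy K μ a p + isotropicEnergy K μ b q := by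
  unfold isotropicEnergy
  linear_combination (K - 2 * μ / 3) * hab

theorem isotropic_energy_split_general (K μ : ℝ)
    (ε : Matrix (Fin 3) (Fin 3) ℝ)
    (lam : Fin 3 → ℝ) (N : Fin 3 → Fin 3 → ℝ)
    (heig : ∀ i, ε.mulVec (N i) = lam i • N i)
    (horth : ∀ i j, N i ⬝ᵥ N j = if i = j then (1 : ℝ) else 0)
    (εp εm : Matrix (Fin 3) (Fin 3) ℝ)
    (hεp : εp = ∑ i, ((lam i + |lam i|) / 2) • vecMulVec (N i) (N i))
    (hεm : εm = ∑ i, ((lam i - |lam i|) / 2) • vecMulVec (N i) (N i))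
    (I₁p I₁m I₂p I₂m : ℝ)
    (hI₁p : I₁p = (ε.trace + |ε.trace|) / 2)
    (hI₁m : I₁m = (ε.trace - |ε.trace|) / 2)
    (hI₂p : I₂p = (εp * εp).trace)
    (hI₂m : I₂m = (εm * εm).trace) :
    I₁p + I₁m = ε.trace ∧
    I₁p * I₁m = 0 ∧
    (ε * ε).trace = I₂p + I₂m ∧
    (K / 2) * (ε.trace) ^ 2 - μ * ((ε.trace) ^ 2 / 3 - (ε * ε).trace)
      = ((K / 2) * I₁p ^ 2 - μ * (I₁p ^ 2 / 3 - I₂p))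
        + ((K / 2) * I₁m ^ 2 - μ * (I₁m ^ 2 / 3 - I₂m)) := by
  have hI₁ : I₁p + I₁m = ε.trace := hI₁p ▸ hI₁m ▸ add_abs_div_two_add_sub_abs_div_two _
  have hI₁pm : I₁p * I₁m = 0 := hI₁p ▸ hI₁m ▸ add_abs_div_two_mul_sub_abs_div_two _
  have hε : ε = εp + εm := by
    rw [eq_sum_smul_vecMulVec_of_mulVec_eq heig horth, hεp, hεm, ← Finset.sum_add_distrib]
    simp only [← add_smul, add_abs_div_two_add_sub_abs_div_two]
  have hεpm : εp * εm = 0 := by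
    rw [hεp, hεm, sum_smul_vecMulVec_mul_sum_smul_vecMulVec horth]
    simp only [add_abs_div_two_mul_sub_abs_div_two, zero_smul, Finset.sum_const_zero]
  have hI₂ : (ε * ε).trace = I₂p + I₂m := by
    rw [hε, trace_add_mul_add_of_mul_eq_zero hεpm, hI₂p, hI₂m]
  refine ⟨hI₁, hI₁pm, hI₂, ?_⟩
  have := isotropicEnergy_add_add_of_mul_eq_zero K μ hI₁pm I₂p I₂m
  rwa [hI₁, ← hI₂] at this

/-- Additive split of the isotropic strain energy via the spectral decomposition:
with `ε± = Σᵢ ⟨lam i⟩± (N i)(N i)ᵀ`, split invariants `I₁± = ⟨tr ε⟩±` and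
`I₂± = tr((ε±)²)` satisfy `I₁⁺ + I₁⁻ = tr ε`, `I₁⁺ ⬝ I₁⁻ = 0`,
`tr(ε²) = I₂⁺ + I₂⁻`, and `Ψ̃(I₁, I₂) = Ψ̃(I₁⁺, I₂⁺) + Ψ̃(I₁⁻, I₂⁻)` where
`Ψ̃(I₁, I₂) = (K/2)I₁² - μ(I₁²/3 - I₂)`. -/
theorem isotropic_energy_split (K μ : ℝ) (hK : 0 < K) (hμ : 0 < μ)
    (ε : Matrix (Fin 3) (Fin 3) ℝ) (hε : ε.IsSymm)
    (lam : Fin 3 → ℝ) (N : Fin 3 → Fin 3 → ℝ)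
    (heig : ∀ i, ε.mulVec (N i) = lam i • N i)
    (horth : ∀ i j, N i ⬝ᵥ N j = if i = j then (1 : ℝ) else 0)
    (εp εm : Matrix (Fin 3) (Fin 3) ℝ)
    (hεp : εp = ∑ i, ((lam i + |lam i|) / 2) • vecMulVec (N i) (N i))
    (hεm : εm = ∑ i, ((lam i - |lam i|) / 2) • vecMulVec (N i) (N i))
    (I₁p I₁m I₂p I₂m : ℝ)
    (hI₁p : I₁p = (ε.trace + |ε.trace|) / 2)
    (hI₁m : I₁m = (ε.trace - |ε.trace|) / 2)
    (hI₂p : I₂p = (εp * εp).trace)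
    (hI₂m : I₂m = (εm * εm).trace) :
    I₁p + I₁m = ε.trace ∧
    I₁p * I₁m = 0 ∧
    (ε * ε).trace = I₂p + I₂m ∧
    (K / 2) * (ε.trace) ^ 2 - μ * ((ε.trace) ^ 2 / 3 - (ε * ε).trace)
      = ((K / 2) * I₁p ^ 2 - μ * (I₁p ^ 2 / 3 - I₂p))
        + ((K / 2) * I₁m ^ 2 - μ * (I₁m ^ 2 / 3 - I₂m)) :=
  isotropic_energy_split_general K μ ε lam N heig horth εp εm hεp hεm I₁p I₁m I₂p I₂m hI₁p hI₁m hI₂p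
    hI₂m
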